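/- arXiv:2509.05850 — 2 statements merged into one kernel-verified Lean document; each statement's English description precedes it below -/
import Mathlib

section
/- Let R be an Artinian local ring and C ⊆ R^n an MDS code. Then λ(C(A)) = max{0, |A| − d + 1}·λ(R) for every subset A ⊆ {1,...,n}, where d = d_H(C); conversely, if this holds for all A, then C is MDS. -/
open IsLocalRing

/-- Length of a module, as a natural number: the Krull dimension of its submodule lattice
(i.e. the supremum of lengths of chains of submodules). -/
noncomputable def lenN (R M : Type*) [CommRing R] [AddCommGroup M] [Module R M] : ℕ :=
  (WithBot.unbotD 0 (Order.krullDim (Submodule R M))).toNat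

/-- The socle of a module over a local ring: elements killed by the maximal ideal. -/
abbrev socle (R M : Type*) [CommRing R] [IsLocalRing R] [AddCommGroup M] [Module R M] :
    Submodule R M :=
  Submodule.torsionBySet R M (maximalIdeal R)

/-- type(M) = dim_K soc(M), the dimension of the socle over the residue field K = R/m. -/
noncomputable def typeOf (R M : Type*) [CommRing R] [IsLocalRing R] [AddCommGroup M]
    [Module R M] : ℕ :=
  Module.finrank (R ⧸ maximalIdeal R) (socle R M)

/-- Minimal number of generators of a module. -/
noncomputable def mu (R M : Type*) [CommRing R] [AddCommGroup M] [Module R M] : ℕ :=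
  sInf {k : ℕ | ∃ s : Finset M, s.card = k ∧ Submodule.span R (s : Set M) = ⊤}

/-- Free rank: the largest r admitting an R-linear surjection M → R^r. -/
noncomputable def freeRank (R M : Type*) [CommRing R] [AddCommGroup M] [Module R M] : ℕ :=
  sSup {r : ℕ | ∃ f : M →ₗ[R] (Fin r → R), Function.Surjective f}

/-- An Artinian local ring is Frobenius if its socle is 1-dimensional over the residue field. -/
def IsFrobenius (R : Type*) [CommRing R] [IsLocalRing R] : Prop :=
  typeOf R R = 1

/-- The orthogonal (dual) code with respect to the standard bilinear form on R^n. -/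
def dualCode {R : Type*} [CommRing R] {n : ℕ} (C : Submodule R (Fin n → R)) :
    Submodule R (Fin n → R) where
  carrier := {v | ∀ w ∈ C, ∑ i, v i * w i = 0}
  zero_mem' := by intro w _; simp
  add_mem' := by
    intro a b ha hb w hw
    simpa [add_mul, Finset.sum_add_distrib] using by rw [ha w hw, hb w hw, add_zero]
  smul_mem' := by
    intro c a ha w hw
    simp only [Set.mem_setOf_eq] at ha ⊢
    simp [Pi.smul_apply, smul_eq_mul, mul_assoc, ← Finset.mul_sum, ha w hw]

/-- The submodule H_A of vectors of R^n supported on a set A of coordinates. -/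
def suppCode (R : Type*) [CommRing R] {n : ℕ} (A : Finset (Fin n)) :
    Submodule R (Fin n → R) where
  carrier := {v | ∀ i, i ∉ A → v i = 0}
  zero_mem' := by intro i _; simp
  add_mem' := by intro a b ha hb i hi; simp [ha i hi, hb i hi]
  smul_mem' := by intro c a ha i hi; simp [ha i hi]

open Classical in
/-- Hamming weight of a vector. -/
noncomputable def wt {R : Type*} [CommRing R] {n : ℕ} (v : Fin n → R) : ℕ :=
  (Finset.univ.filter (fun i => v i ≠ 0)).card

/-- Minimum Hamming distance (= minimum weight of a nonzero codeword) of a code. -/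
noncomputable def dH {R : Type*} [CommRing R] {n : ℕ} (C : Submodule R (Fin n → R)) : ℕ :=
  sInf {w : ℕ | ∃ v ∈ C, v ≠ 0 ∧ wt v = w}

/-- The coordinatewise reduction R^n → K^n modulo the maximal ideal. -/
def rho (R : Type*) [CommRing R] [IsLocalRing R] {n : ℕ} (v : Fin n → R) :
    Fin n → R ⧸ maximalIdeal R :=
  fun i => Ideal.Quotient.mk (maximalIdeal R) (v i)

/-!
Restricting codewords to a set `S` of coordinates has kernel `C(Sᶜ)`, so
`λ(C) ≤ λ(C(A)) + (n - |A|)·λ(R)` for every `A`; for an MDS code this is the lower bound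
`λ(C(A)) ≥ (|A| + 1 - d)·λ(R)`. On the other hand, a nonzero codeword supported on fewer
than `d` coordinates cannot exist, so restricting `C(A)` to `A \ B` with `|B| = min |A| (d - 1)` is
injective, giving the matching upper bound. The converse direction is the case `A = [n]`.
-/

open LinearMap

section Length

variable {R M N : Type*} [CommRing R] [AddCommGroup M] [Module R M] [AddCommGroup N] [Module R N]

lemma length_eq_lenN [IsArtinian R M] [IsNoetherian R M] :
    Module.length R M = lenN R M := by
  rw [lenN, ← Module.coe_length, WithBot.unbotD_coe, ENat.natCast_toNat Module.length_ne_top]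

lemma lenN_eq_zero [Subsingleton M] : lenN R M = 0 := by
  rw [lenN, ← Module.coe_length, WithBot.unbotD_coe, Module.length_eq_zero, ENat.toNat_zero]

lemma length_le_length_inf_ker_add (P : Submodule R M) (f : M →ₗ[R] N) :
    Module.length R P ≤ Module.length R ↥(P ⊓ ker f) + Module.length R N := by
  let g := f.domRestrict P
  have hexact : Function.Exact (Submodule.inclusion (inf_le_left : P ⊓ ker f ≤ P))
      g.rangeRestrict := by
    rintro ⟨x, hx⟩
    simp [g, Subtype.ext_iff, Submodule.mem_inf, hx]
  rw [Module.length_eq_add_of_exact _ g.rangeRestrict (Submodule.inclusion_injective _)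
    g.surjective_rangeRestrict hexact]
  gcongr
  exact Module.length_le_of_injective _ (Submodule.subtype_injective (range g))

lemma lenN_le_lenN_inf_ker_add [IsArtinian R M] [IsNoetherian R M] [IsArtinian R N]
    [IsNoetherian R N] (P : Submodule R M) (f : M →ₗ[R] N) :
    lenN R P ≤ lenN R ↥(P ⊓ ker f) + lenN R N := by
  have h := length_le_length_inf_ker_add P f
  rwa [length_eq_lenN, length_eq_lenN, length_eq_lenN, ← Nat.cast_add, Nat.cast_le] at h

lemma lenN_pi [IsArtinianRing R] (ι : Type*) [Fintype ι] :
    lenN R (ι → R) = Fintype.card ι * lenN R R := by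
  have h := Module.length_pi (R := R) (M := R) (ι := ι)
  rwa [length_eq_lenN, length_eq_lenN, ENat.card_eq_coe_fintype_card, ← Nat.cast_mul,
    Nat.cast_inj] at h

end Length

section Code

variable {R : Type*} [CommRing R] {n : ℕ}

lemma mem_suppCode {A : Finset (Fin n)} {v : Fin n → R} :
    v ∈ suppCode R A ↔ ∀ i, i ∉ A → v i = 0 :=
  Iff.rfl

lemma suppCode_univ : suppCode R (Finset.univ : Finset (Fin n)) = ⊤ :=
  eq_top_iff.mpr fun _ _ i hi => absurd (Finset.mem_univ i) hi

lemma wt_le_card_of_mem_suppCode {A : Finset (Fin n)} {v : Fin n → R}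
    (hv : v ∈ suppCode R A) : wt v ≤ A.card := by
  classical
  refine Finset.card_le_card fun i hi => ?_
  by_contra hiA
  exact (Finset.mem_filter.mp hi).2 (hv i hiA)

lemma wt_pos {v : Fin n → R} (hv : v ≠ 0) : 0 < wt v := by
  classical
  obtain ⟨i, hi⟩ := Function.ne_iff.mp hv
  exact Finset.card_pos.mpr ⟨i, Finset.mem_filter.mpr ⟨Finset.mem_univ i, hi⟩⟩

lemma dH_le_wt {C : Submodule R (Fin n → R)} {v : Fin n → R} (hv : v ∈ C) (h0 : v ≠ 0) :
    dH C ≤ wt v :=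
  Nat.sInf_le ⟨v, hv, h0, rfl⟩

lemma one_le_dH {C : Submodule R (Fin n → R)} (hC : C ≠ ⊥) : 1 ≤ dH C := by
  obtain ⟨v, hv, h0⟩ := (Submodule.ne_bot_iff C).mp hC
  exact le_csInf ⟨wt v, v, hv, h0, rfl⟩ fun _ ⟨_, _, hu0, hw⟩ => hw ▸ wt_pos hu0

lemma dH_le (C : Submodule R (Fin n → R)) : dH C ≤ n := by
  by_cases hC : C = ⊥
  · simp [dH, hC]
  obtain ⟨v, hv, h0⟩ := (Submodule.ne_bot_iff C).mp hC
  calc dH C ≤ wt v := dH_le_wt hv h0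
    _ ≤ (Finset.univ : Finset (Fin n)).card :=
      wt_le_card_of_mem_suppCode (suppCode_univ (R := R) ▸ Submodule.mem_top)
    _ = n := by simp

lemma inf_suppCode_eq_bot_of_card_lt_dH {C : Submodule R (Fin n → R)} {A : Finset (Fin n)}
    (hA : A.card < dH C) : C ⊓ suppCode R A = ⊥ := by
  refine eq_bot_iff.mpr fun v hv => (Submodule.mem_bot R).mpr ?_
  by_contra h0
  have := dH_le_wt (Submodule.mem_inf.mp hv).1 h0
  have := wt_le_card_of_mem_suppCode (Submodule.mem_inf.mp hv).2
  omega

lemma suppCode_inf (A B : Finset (Fin n)) :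
    suppCode R A ⊓ suppCode R B = suppCode R (A ∩ B) := by
  ext v
  simp only [Submodule.mem_inf, mem_suppCode, Finset.mem_inter, not_and_or, or_imp, forall_and]

lemma suppCode_mono {A B : Finset (Fin n)} (h : A ⊆ B) : suppCode R A ≤ suppCode R B :=
  fun _ hv i hi => hv i fun hiA => hi (h hiA)

lemma ker_funLeft_coe (S : Finset (Fin n)) :
    ker (funLeft R R ((↑) : S → Fin n)) = suppCode R Sᶜ := by
  ext v
  simp only [mem_ker, funext_iff, funLeft_apply, Pi.zero_apply, Subtype.forall]
  exact ⟨fun h i hi => h i (Finset.notMem_compl.mp hi),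
    fun h i hi => h i (Finset.notMem_compl.mpr hi)⟩

variable [IsArtinianRing R]

lemma lenN_le_lenN_inf_suppCode_add (C : Submodule R (Fin n → R)) (A : Finset (Fin n)) :
    lenN R C ≤ lenN R ↥(C ⊓ suppCode R A) + (n - A.card) * lenN R R := by
  have h := lenN_le_lenN_inf_ker_add C (funLeft R R ((↑) : ↥Aᶜ → Fin n))
  rwa [ker_funLeft_coe, compl_compl, lenN_pi, Fintype.card_coe, Finset.card_compl,
    Fintype.card_fin] at h

lemma lenN_inf_suppCode_le {C : Submodule R (Fin n → R)} (hd : 1 ≤ dH C) (A : Finset (Fin n)) :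
    lenN R ↥(C ⊓ suppCode R A) ≤ (A.card + 1 - dH C) * lenN R R := by
  classical
  obtain ⟨B, hBA, hB⟩ := Finset.exists_subset_card_eq (min_le_left A.card (dH C - 1))
  have hker : C ⊓ suppCode R A ⊓ ker (funLeft R R ((↑) : ↥(A \ B) → Fin n)) = ⊥ := by
    rw [ker_funLeft_coe, inf_assoc, suppCode_inf, eq_bot_iff,
      ← inf_suppCode_eq_bot_of_card_lt_dH (C := C) (A := B) (by omega)]
    refine inf_le_inf_left C (suppCode_mono fun i hi => ?_)
    simp only [Finset.mem_inter, Finset.mem_compl, Finset.mem_sdiff] at hi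
    tauto
  have h := lenN_le_lenN_inf_ker_add (C ⊓ suppCode R A) (funLeft R R ((↑) : ↥(A \ B) → Fin n))
  rwa [hker, lenN_eq_zero (M := ↥(⊥ : Submodule R (Fin n → R))), zero_add, lenN_pi,
    Fintype.card_coe, Finset.card_sdiff_of_subset hBA, hB,
    show A.card - min A.card (dH C - 1) = A.card + 1 - dH C by omega] at h

end Code

theorem stmt17_general (R : Type*) [CommRing R] [IsArtinianRing R]
    {n : ℕ} (C : Submodule R (Fin n → R)) (hC : C ≠ ⊥) :
    lenN R C = (n - dH C + 1) * lenN R R ↔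
      ∀ A : Finset (Fin n),
        lenN R ↥(C ⊓ suppCode R A) = (A.card + 1 - dH C) * lenN R R := by
  have hdn := dH_le C
  constructor
  · intro hMDS A
    refine le_antisymm (lenN_inf_suppCode_le (one_le_dH hC) A) ?_
    have hlower := lenN_le_lenN_inf_suppCode_add C A
    have hAn : A.card ≤ n := (Finset.card_le_univ A).trans_eq (Fintype.card_fin n)
    rw [hMDS, ← Nat.sub_le_iff_le_add, ← Nat.sub_mul] at hlower
    rwa [show n - dH C + 1 - (n - A.card) = A.card + 1 - dH C by omega] at hlower
  · intro h
    have huniv := h Finset.univ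
    rw [suppCode_univ, inf_top_eq, Finset.card_univ, Fintype.card_fin] at huniv
    rwa [show n - dH C + 1 = n + 1 - dH C by omega]

/-- C is MDS iff λ(C(A)) = max{0, |A| − d + 1}·λ(R) for every A ⊆ [n],
where d = d_H(C) (note max{0, |A| − d + 1} = |A| + 1 − d as truncated subtraction). -/
theorem stmt17 (R : Type*) [CommRing R] [IsLocalRing R] [IsArtinianRing R]
    {n : ℕ} (C : Submodule R (Fin n → R)) (hC : C ≠ ⊥) :
    lenN R C = (n - dH C + 1) * lenN R R ↔
      ∀ A : Finset (Fin n),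
        lenN R ↥(C ⊓ suppCode R A) = (A.card + 1 - dH C) * lenN R R :=
  stmt17_general R C hC
end

section
/- Let R be a finite local Artinian ring with residue field of size q, and C ⊆ R^n a submodule. Then L_C(x, y, q) = W_C(x + y, y), where L_C(x,y,z) = Σ_{A ⊆ [n]} z^{λ(C(A))} x^{n−|A|} y^{|A|} and W_C(x,y) = Σ_i A_i^C x^{n−i} y^i with A_i^C the number of codewords of Hamming weight i. -/
open IsLocalRing

/-! Every composition factor of a finite module `M` over a local ring is the residue field `K`,
so `|M| = |K| ^ λ(M)` and `|K| ^ λ(C(A))` counts the codewords supported in `A`. Exchanging the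
two sums, a codeword `v` contributes `∑_{A ⊇ supp v} x ^ (n - |A|) * y ^ |A|`, which is
`y ^ wt(v) * (x + y) ^ (n - wt(v))` by the binomial theorem over the subsets of the complement of
`supp v`. -/

open Finset

section Length

variable {R M : Type*} [CommRing R] [AddCommGroup M] [Module R M]

lemma lenN_eq_toNat_length : lenN R M = (Module.length R M).toNat := by
  rw [lenN, ← Module.coe_length, WithBot.unbotD_coe]

variable [IsLocalRing R]

lemma IsSimpleModule.natCard_eq_natCard_residue [IsSimpleModule R M] :
    Nat.card M = Nat.card (R ⧸ maximalIdeal R) := by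
  obtain ⟨I, hI, ⟨e⟩⟩ := isSimpleModule_iff_quot_maximal.mp ‹IsSimpleModule R M›
  rw [eq_maximalIdeal hI] at e
  exact Nat.card_congr e.toEquiv

lemma CovBy.natCard_eq_mul {A B : Submodule R M} (h : A ⋖ B) :
    Nat.card B = Nat.card A * Nat.card (R ⧸ maximalIdeal R) := by
  have : IsSimpleModule R (B ⧸ A.comap B.subtype) := (covBy_iff_quot_is_simple h.le).mp h
  rw [(A.comap B.subtype).card_eq_card_quotient_mul_card,
    IsSimpleModule.natCard_eq_natCard_residue (R := R) (M := B ⧸ A.comap B.subtype),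
    Nat.card_congr (Submodule.comapSubtypeEquivOfLe h.le).toEquiv]

lemma natCard_eq_pow_length [Finite M] :
    Nat.card M = Nat.card (R ⧸ maximalIdeal R) ^ (Module.length R M).toNat := by
  have : IsArtinian R M := isArtinian_of_finite
  obtain ⟨s, hs_bot, hs_top⟩ := exists_compositionSeries_of_isNoetherian_isArtinian R M
  rw [← Module.length_compositionSeries s hs_bot hs_top, ENat.toNat_natCast]
  suffices ∀ k, Nat.card (s k) = Nat.card (R ⧸ maximalIdeal R) ^ (k : ℕ) by
    rw [← Fin.val_last s.length, ← this, ← RelSeries.last, hs_top,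
      Nat.card_congr Submodule.topEquiv.toEquiv]
  intro k
  induction k using Fin.induction with
  | zero => rw [← RelSeries.head, hs_bot]; simp
  | succ i ih => rw [(s.step i).natCard_eq_mul, ih, Fin.val_succ, Fin.val_castSucc, pow_succ]

end Length

lemma Finset.sum_supersets_pow_mul_pow {ι S : Type*} [Fintype ι] [DecidableEq ι]
    [CommSemiring S] (s : Finset ι) (x y : S) :
    ∑ A with s ⊆ A, x ^ (Fintype.card ι - #A) * y ^ #A =
      y ^ #s * (x + y) ^ (Fintype.card ι - #s) := by
  have hsupersets : ({A | s ⊆ A} : Finset (Finset ι)) = sᶜ.powerset.image (s ∪ ·) := by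
    rw [compl_eq_univ_sdiff, ← Icc_eq_image_powerset (subset_univ s)]
    ext A
    simp
  have hinj : Set.InjOn (s ∪ ·) (sᶜ.powerset : Set (Finset ι)) := by
    intro B₁ hB₁ B₂ hB₂ h
    simp only [coe_powerset, Set.mem_preimage, Set.mem_powerset_iff, coe_subset,
      subset_compl_iff_disjoint_left] at hB₁ hB₂ h
    rw [← union_sdiff_cancel_left hB₁, h, union_sdiff_cancel_left hB₂]
  rw [hsupersets, sum_image hinj, add_comm x y, ← card_compl, ← sum_pow_mul_eq_add_pow y x,
    mul_sum]
  refine sum_congr rfl fun B hB => ?_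
  have hdisj : Disjoint s B := subset_compl_iff_disjoint_left.mp (mem_powerset.mp hB)
  rw [card_union_of_disjoint hdisj, pow_add, Nat.sub_add_eq, card_compl]
  ring

lemma sum_card_supp_subset_eq_sum_card_supp_card_eq {X ι S : Type*} [Fintype X] [Fintype ι]
    [DecidableEq ι] [CommSemiring S] (supp : X → Finset ι) (x y : S) :
    ∑ A : Finset ι, (#{v | supp v ⊆ A} : S) * x ^ (Fintype.card ι - #A) * y ^ #A =
      ∑ i ∈ range (Fintype.card ι + 1),
        (#{v | #(supp v) = i} : S) * (x + y) ^ (Fintype.card ι - i) * y ^ i := by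
  set n := Fintype.card ι
  calc ∑ A : Finset ι, (#{v | supp v ⊆ A} : S) * x ^ (n - #A) * y ^ #A
      = ∑ A : Finset ι, ∑ v with supp v ⊆ A, x ^ (n - #A) * y ^ #A := by
        simp only [sum_const, nsmul_eq_mul, mul_assoc]
    _ = ∑ v, ∑ A with supp v ⊆ A, x ^ (n - #A) * y ^ #A :=
        sum_comm' fun _ _ => by simp only [mem_filter, mem_univ, true_and, and_true]
    _ = ∑ v, y ^ #(supp v) * (x + y) ^ (n - #(supp v)) :=
        sum_congr rfl fun v _ => sum_supersets_pow_mul_pow (supp v) x y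
    _ = ∑ i ∈ range (n + 1), ∑ v with #(supp v) = i, (x + y) ^ (n - i) * y ^ i := by
        rw [← sum_fiberwise_of_maps_to (g := fun v => #(supp v)) (t := range (n + 1))
          fun v _ => mem_range_succ_iff.mpr (card_le_univ (supp v))]
        refine sum_congr rfl fun i _ => sum_congr rfl fun v hv => ?_
        rw [(mem_filter.mp hv).2, mul_comm]
    _ = _ := by simp only [sum_const, nsmul_eq_mul, mul_assoc]

section Support

variable {R : Type*} [CommRing R] {n : ℕ}

open Classical in
noncomputable def hammingSupport (v : Fin n → R) : Finset (Fin n) :=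
  {i | v i ≠ 0}

lemma wt_eq_card_hammingSupport (v : Fin n → R) : wt v = #(hammingSupport v) := rfl

lemma mem_suppCode_iff {A : Finset (Fin n)} {v : Fin n → R} :
    v ∈ suppCode R A ↔ hammingSupport v ⊆ A := by
  change (∀ i, i ∉ A → v i = 0) ↔ _
  simp only [hammingSupport, subset_iff, mem_filter, mem_univ, true_and, not_imp_comm]

lemma natCard_inf_suppCode (C : Submodule R (Fin n → R)) (A : Finset (Fin n)) :
    Nat.card ↥(C ⊓ suppCode R A) = Nat.card {v : C // hammingSupport (v : Fin n → R) ⊆ A} :=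
  Nat.card_congr <| (Equiv.subtypeEquivRight fun _ => by
    rw [Submodule.mem_inf, mem_suppCode_iff]).trans
    (Equiv.subtypeSubtypeEquivSubtypeInter _ _).symm

end Support

theorem stmt18_general (R : Type*) [CommRing R] [IsLocalRing R] [Fintype R]
    {n : ℕ} (C : Submodule R (Fin n → R))
    (S : Type*) [CommRing S] (x y : S) :
    ∑ A : Finset (Fin n),
        (Nat.card (R ⧸ maximalIdeal R) : S) ^ lenN R ↥(C ⊓ suppCode R A) *
          x ^ (n - A.card) * y ^ A.card
      = ∑ i ∈ Finset.range (n + 1),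
          (Nat.card {v : C // wt (v : Fin n → R) = i} : S) * (x + y) ^ (n - i) * y ^ i := by
  classical
  have hlen (A : Finset (Fin n)) :
      (Nat.card (R ⧸ maximalIdeal R) : S) ^ lenN R ↥(C ⊓ suppCode R A) =
        #{v : C | hammingSupport (v : Fin n → R) ⊆ A} := by
    rw [lenN_eq_toNat_length, ← Nat.cast_pow, ← natCard_eq_pow_length, natCard_inf_suppCode,
      Nat.card_eq_fintype_card, Fintype.card_subtype]
  have hwt (i : ℕ) : Nat.card {v : C // wt (v : Fin n → R) = i} =
      #{v : C | #(hammingSupport (v : Fin n → R)) = i} := by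
    simp only [wt_eq_card_hammingSupport, Nat.card_eq_fintype_card, Fintype.card_subtype]
  simp only [hlen, hwt]
  simpa only [Fintype.card_fin] using sum_card_supp_subset_eq_sum_card_supp_card_eq
    (fun v : C => hammingSupport (v : Fin n → R)) x y

/-- over a finite local Artinian ring with |K| = q, the length enumerator
and weight enumerator satisfy L_C(x, y, q) = W_C(x + y, y), as polynomials in x, y. -/
theorem stmt18 (R : Type*) [CommRing R] [IsLocalRing R] [IsArtinianRing R] [Fintype R]
    {n : ℕ} (C : Submodule R (Fin n → R))
    (S : Type*) [CommRing S] (x y : S) :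
    ∑ A : Finset (Fin n),
        (Nat.card (R ⧸ maximalIdeal R) : S) ^ lenN R ↥(C ⊓ suppCode R A) *
          x ^ (n - A.card) * y ^ A.card
      = ∑ i ∈ Finset.range (n + 1),
          (Nat.card {v : C // wt (v : Fin n → R) = i} : S) * (x + y) ^ (n - i) * y ^ i :=
  stmt18_general R C S x y
end
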